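/- arXiv:2005.06947 — 7 statements merged into one kernel-verified Lean document; each statement's English description precedes it below -/
import Mathlib

section
/- For every k-uniform hypergraph G on [n] with chromatic number χ, if there exists an erasure code over alphabet F handling all k-subsets of [χ] (i.e., an (χ,k) MDS code over F), then there exists an erasure code over F for G: an encoding C:F^k→F^n and decoding D such that for every edge e of G and message m, decoding the codeword restricted to coordinates in e recovers m. -/
/-- If a k-uniform hypergraph G on [n] admits a proper (strong) coloring with χ
colors, and there is an erasure code over alphabet F decoding from every k-subset of [χ]
(i.e. a (χ,k) MDS code over F), then there is an erasure code over F for G. -/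
theorem stmt0 {n k χ : ℕ} (F : Type) (E : Finset (Finset (Fin n)))
    (hk : ∀ e ∈ E, e.card = k)
    (g : Fin n → Fin χ)
    (hg : ∀ e ∈ E, ∀ i ∈ e, ∀ j ∈ e, i ≠ j → g i ≠ g j)
    (C0 : (Fin k → F) → Fin χ → F) (D0 : (Fin χ → Option F) → Fin k → F)
    (h0 : ∀ S : Finset (Fin χ), S.card = k → ∀ m : Fin k → F,
      D0 (fun i => if i ∈ S then some (C0 m i) else none) = m) :
    ∃ (C : (Fin k → F) → Fin n → F) (D : (Fin n → Option F) → Fin k → F),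
      ∀ e ∈ E, ∀ m : Fin k → F,
        D (fun i => if i ∈ e then some (C m i) else none) = m := by
  classical
  refine ⟨fun m i => C0 m (g i),
    fun w => D0 (fun j => if h : ∃ i, g i = j ∧ (w i).isSome then w h.choose else none),
    ?_⟩
  intro e he m
  have hinj : Set.InjOn g e := fun i hi j hj hij => by
    by_contra hne
    exact hg e he i hi j hj hne hij
  have hcard : (e.image g).card = k := by
    rw [Finset.card_image_of_injOn hinj, hk e he]
  have key : (fun j => if h : ∃ i, g i = j ∧ ((fun i => if i ∈ e then some (C0 m (g i)) else none) i).isSome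
      then (fun i => if i ∈ e then some (C0 m (g i)) else none) h.choose else none)
      = (fun j : Fin χ => if j ∈ e.image g then some (C0 m j) else none) := by
    funext j
    by_cases hj : j ∈ e.image g
    · obtain ⟨i, hi, hgi⟩ := Finset.mem_image.mp hj
      have hex : ∃ i', g i' = j ∧ ((fun i => if i ∈ e then some (C0 m (g i)) else none) i').isSome := by
        exact ⟨i, hgi, by simp [hi]⟩
      rw [dif_pos hex, if_pos hj]
      obtain ⟨h1, h2⟩ := hex.choose_spec
      have hmem : hex.choose ∈ e := by
        by_contra hc
        simp only [hc, if_false, Option.isSome_none] at h2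
        exact Bool.false_ne_true h2
      simp only [hmem, if_true, if_pos hj, h1]
    · rw [if_neg hj, dif_neg]
      rintro ⟨i, h1, h2⟩
      have hmem : i ∈ e := by
        by_contra hc
        simp only [hc, if_false, Option.isSome_none] at h2
        exact Bool.false_ne_true h2
      exact hj (Finset.mem_image.mpr ⟨i, hmem, h1⟩)
  simp only [key]
  exact h0 (e.image g) hcard m
end

section
/- Let F be a field with q elements and k ≥ 3. Let G be the k-uniform hypergraph whose vertices are the normalized nonzero vectors of F^k (vectors whose leading nonzero entry equals 1), and whose edges are the k-sets of vertices whose vectors are linearly independent. Then G has (q^k−1)/(q−1) vertices, every two vertices lie in a common edge, and hence χ(G) = (q^k−1)/(q−1). -/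
/-- A vector in F^k is normalized if its leading nonzero entry equals 1. -/
def Normalized {k : ℕ} {F : Type} [Field F] (x : Fin k → F) : Prop :=
  ∃ i : Fin k, x i = 1 ∧ ∀ j : Fin k, j < i → x j = 0

/-!
Normalized vectors are the canonical representatives of the points of `ℙ(F^k)`, which gives
the count. Two distinct normalized vectors are linearly independent, hence extend to a basis of
`F^k`; rescaling every basis vector to its normalized multiple yields an edge through both.
So every strong colouring is injective, and the strong chromatic number is the number of
vertices.
-/

open Module
open scoped LinearAlgebra.Projectivization

section Normalized

variable {F : Type} [Field F] {k : ℕ}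

theorem Normalized.ne_zero {x : Fin k → F} (hx : Normalized x) : x ≠ 0 := by
  obtain ⟨i, hi, -⟩ := hx
  rintro rfl
  exact zero_ne_one hi

theorem Normalized.eq_of_smul_eq {x y : Fin k → F} (hx : Normalized x) (hy : Normalized y)
    {c : F} (h : c • y = x) : x = y := by
  obtain ⟨i, hxi, hx0⟩ := hx
  obtain ⟨j, hyj, hy0⟩ := hy
  have hxj : x j = c := by simp [← h, hyj]
  have hij : i = j := by
    rcases lt_trichotomy i j with hlt | heq | hgt
    · simp [← h, hy0 i hlt] at hxi
    · exact heq
    · have hc : c = 0 := hxj ▸ hx0 j hgt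
      simp [← h, hc] at hxi
  subst hij
  rw [← h, ← hxj, hxi, one_smul]

theorem exists_unit_smul_normalized {x : Fin k → F} (hx : x ≠ 0) :
    ∃ c : Fˣ, Normalized (c • x) := by
  obtain ⟨i, hi, hmin⟩ := WellFounded.has_min wellFounded_lt {i | x i ≠ 0}
    (Function.ne_iff.mp hx)
  refine ⟨Units.mk0 (x i)⁻¹ (inv_ne_zero hi), i, inv_mul_cancel₀ hi, fun j hj => ?_⟩
  have hxj : x j = 0 := not_not.mp fun hj' => hmin j hj' hj
  simp [hxj]

theorem linearIndepOn_pair_of_ne {u v : {x : Fin k → F // Normalized x}} (huv : u ≠ v) :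
    LinearIndepOn F id {u.1, v.1} := by
  refine (linearIndepOn_pair_iff id (Subtype.coe_ne_coe.mpr huv) u.2.ne_zero).mpr
    fun c hc => huv ?_
  exact Subtype.ext (v.2.eq_of_smul_eq u.2 hc).symm

noncomputable def normalizedEquivProjectivization :
    {x : Fin k → F // Normalized x} ≃ ℙ F (Fin k → F) :=
  Equiv.ofBijective (fun x => Projectivization.mk F x.1 x.2.ne_zero)
    ⟨fun x y hxy => by
      obtain ⟨c, hc⟩ := (Projectivization.mk_eq_mk_iff' F _ _ _ _).mp hxy
      exact Subtype.ext (x.2.eq_of_smul_eq y.2 hc),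
    fun D => by
      obtain ⟨c, hc⟩ := exists_unit_smul_normalized D.rep_nonzero
      refine ⟨⟨_, hc⟩, ?_⟩
      conv_rhs => rw [← D.mk_rep]
      exact (Projectivization.mk_eq_mk_iff F _ _ _ _).mpr ⟨c, rfl⟩⟩

theorem card_normalized [Finite F] :
    Nat.card {x : Fin k → F // Normalized x} = (Nat.card F ^ k - 1) / (Nat.card F - 1) := by
  rw [Nat.card_congr normalizedEquivProjectivization, Projectivization.card'', Nat.card_fun,
    Nat.card_fin]

theorem exists_edge_of_basis {ι : Type*} (b : Basis ι F (Fin k → F)) :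
    ∃ s : Finset {x : Fin k → F // Normalized x}, s.card = k ∧
      LinearIndependent F (fun x : s => (x.val.val : Fin k → F)) ∧
      ∀ w : {x : Fin k → F // Normalized x}, w.1 ∈ Set.range b → w ∈ s := by
  classical
  have := Module.Finite.finite_basis b
  have := Fintype.ofFinite ι
  choose c hc using fun i => exists_unit_smul_normalized (b.ne_zero i)
  let g : ι → {x : Fin k → F // Normalized x} := fun i => ⟨c i • b i, hc i⟩
  have hg : LinearIndependent F (Subtype.val ∘ g) := b.linearIndependent.units_smul c
  have hg_inj : Function.Injective g := hg.injective.of_comp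
  refine ⟨Finset.univ.image g, ?_, ?_, fun w ⟨i, hi⟩ => ?_⟩
  · rw [Finset.card_image_of_injective _ hg_inj, Finset.card_univ, ← finrank_eq_card_basis b,
      finrank_fin_fun]
  · change LinearIndepOn F Subtype.val
      (↑(Finset.univ.image g) : Set {x : Fin k → F // Normalized x})
    rwa [Finset.coe_image, Finset.coe_univ, Set.image_univ, linearIndepOn_range_iff hg_inj]
  · have hgw : g i = w := Subtype.ext <| (hc i).eq_of_smul_eq w.2 (c := c i) (by rw [hi]; rfl)
    exact Finset.mem_image.mpr ⟨i, Finset.mem_univ _, hgw⟩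

theorem exists_edge_of_ne {u v : {x : Fin k → F // Normalized x}} (huv : u ≠ v) :
    ∃ s : Finset {x : Fin k → F // Normalized x}, s.card = k ∧
      LinearIndependent F (fun x : s => (x.val.val : Fin k → F)) ∧ u ∈ s ∧ v ∈ s := by
  have hli := linearIndepOn_pair_of_ne huv
  obtain ⟨s, hs, hsli, hmem⟩ := exists_edge_of_basis (Basis.extend hli)
  have mem_s (w : {x : Fin k → F // Normalized x}) (hw : w.1 ∈ ({u.1, v.1} : Set _)) : w ∈ s :=
    hmem w (by rw [Basis.range_extend]; exact Basis.subset_extend hli hw)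
  exact ⟨s, hs, hsli, mem_s u (by simp), mem_s v (by simp)⟩

end Normalized

theorem sInf_injOn_colorings_eq_card {V : Type*} [Finite V] {E : Finset V → Prop}
    (hE : ∀ u v, u ≠ v → ∃ s, E s ∧ u ∈ s ∧ v ∈ s) :
    sInf {c : ℕ | ∃ g : V → Fin c, ∀ s, E s → Set.InjOn g ↑s} = Nat.card V := by
  suffices {c : ℕ | ∃ g : V → Fin c, ∀ s, E s → Set.InjOn g ↑s} = Set.Ici (Nat.card V) by
    rw [this, csInf_Ici]
  ext c
  constructor
  · rintro ⟨g, hg⟩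
    have hg_inj : Function.Injective g := fun u v huv => by
      by_contra hne
      obtain ⟨s, hs, hu, hv⟩ := hE u v hne
      exact hne (hg s hs hu hv huv)
    simpa using Nat.card_le_card_of_injective g hg_inj
  · intro hc
    let g : V → Fin c := Fin.castLE hc ∘ Finite.equivFin V
    exact ⟨g, fun s _ => ((Fin.castLE_injective hc).comp (Finite.equivFin V).injective).injOn⟩

theorem stmt5_general (F : Type) [Field F] [Fintype F] (q k : ℕ)
    (hF : Fintype.card F = q) :
    Nat.card {x : Fin k → F // Normalized x} = (q ^ k - 1) / (q - 1) ∧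
    (∀ u v : {x : Fin k → F // Normalized x}, u ≠ v →
      ∃ s : Finset {x : Fin k → F // Normalized x}, s.card = k ∧
        LinearIndependent F (fun x : s => (x.val.val : Fin k → F)) ∧ u ∈ s ∧ v ∈ s) ∧
    sInf {c : ℕ | ∃ g : {x : Fin k → F // Normalized x} → Fin c,
        ∀ s : Finset {x : Fin k → F // Normalized x}, s.card = k →
          LinearIndependent F (fun x : s => (x.val.val : Fin k → F)) →
            Set.InjOn g ↑s} = (q ^ k - 1) / (q - 1) := by
  have hcard : Nat.card {x : Fin k → F // Normalized x} = (q ^ k - 1) / (q - 1) := by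
    rw [card_normalized, Nat.card_eq_fintype_card, hF]
  refine ⟨hcard, fun u v => exists_edge_of_ne, ?_⟩
  have := sInf_injOn_colorings_eq_card
    (E := fun s : Finset {x : Fin k → F // Normalized x} =>
      s.card = k ∧ LinearIndependent F (fun x : s => (x.val.val : Fin k → F)))
    fun u v huv => by
      obtain ⟨s, hs, hli, hu, hv⟩ := exists_edge_of_ne huv
      exact ⟨s, ⟨hs, hli⟩, hu, hv⟩
  simpa only [and_imp, hcard] using this

/-- For a field F with q elements and k ≥ 3, the k-uniform hypergraph G on the
normalized vectors of F^k, whose edges are the linearly independent k-sets of vertices, has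
(q^k-1)/(q-1) vertices, every two of its vertices lie in a common edge, and its strong
chromatic number equals (q^k-1)/(q-1). -/
theorem stmt5 (F : Type) [Field F] [Fintype F] (q k : ℕ)
    (hF : Fintype.card F = q) (hk : 3 ≤ k) :
    Nat.card {x : Fin k → F // Normalized x} = (q ^ k - 1) / (q - 1) ∧
    (∀ u v : {x : Fin k → F // Normalized x}, u ≠ v →
      ∃ s : Finset {x : Fin k → F // Normalized x}, s.card = k ∧
        LinearIndependent F (fun x : s => (x.val.val : Fin k → F)) ∧ u ∈ s ∧ v ∈ s) ∧
    sInf {c : ℕ | ∃ g : {x : Fin k → F // Normalized x} → Fin c,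
        ∀ s : Finset {x : Fin k → F // Normalized x}, s.card = k →
          LinearIndependent F (fun x : s => (x.val.val : Fin k → F)) →
            Set.InjOn g ↑s} = (q ^ k - 1) / (q - 1) :=
  stmt5_general F q k hF
end

section
/- For every integer q ≥ 1, the chromatic number of G_q is at most C(q+1,2): the binomial coefficient (q+1 choose 2). Specifically, the canonical independent sets A_{i,j} for 1 ≤ i < j ≤ q+1 cover all vertices of G_q. -/
/-- A vector u ∈ [q]^{q²} is balanced if each symbol of [q] appears exactly q times. -/
def BalancedVec (q : ℕ) (u : Fin (q ^ 2) → Fin q) : Prop :=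
  ∀ j : Fin q, (Finset.univ.filter fun i => u i = j).card = q

/-- The graph G_q: vertices are the balanced vectors in [q]^{q²}, and u ~ v iff the
pairs (u_i, v_i) over i ∈ [q²] exhaust all of [q]×[q]. -/
def Gq (q : ℕ) : SimpleGraph {u : Fin (q ^ 2) → Fin q // BalancedVec q u} where
  Adj u v := u ≠ v ∧ Function.Surjective (fun i : Fin (q ^ 2) => (u.val i, v.val i))
  symm := by
    constructor
    rintro u v ⟨hne, hs⟩
    refine ⟨hne.symm, fun p => ?_⟩
    obtain ⟨i, hi⟩ := hs (p.2, p.1)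
    rw [Prod.ext_iff] at hi
    exact ⟨i, by rw [Prod.ext_iff]; exact ⟨hi.2, hi.1⟩⟩
  loopless := by constructor; rintro u ⟨hne, _⟩; exact hne rfl

/-! Colour a balanced vector `u` by a pair `{i, j}` of distinct coordinates among the first
`q + 1` with `u i = u j`; one exists by pigeonhole. If `u ~ v` then `i ↦ (u i, v i)` is a
surjection between sets of size `q²`, hence injective, so `v i ≠ v j` and `u`, `v` get
different colours. -/

theorem SimpleGraph.chromaticNumber_le_of_forall_mem_isIndepSet {V ι : Type*} [Fintype ι]
    (G : SimpleGraph V) (A : ι → Set V) (hA : ∀ i, G.IsIndepSet (A i))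
    (hcover : ∀ v, ∃ i, v ∈ A i) : G.chromaticNumber ≤ Fintype.card ι := by
  choose c hc using hcover
  let C : G.Coloring ι := SimpleGraph.Coloring.mk c fun {u v} huv hcuv =>
    hA (c u) (hc u) (hcuv ▸ hc v) huv.ne huv
  exact C.colorable.chromaticNumber_le

theorem Fintype.exists_card_eq_two_forall_map_eq {α β : Type*} [Fintype α] [Fintype β]
    [DecidableEq α] (f : α → β) (h : Fintype.card β < Fintype.card α) :
    ∃ s : Finset α, s.card = 2 ∧ ∀ i ∈ s, ∀ j ∈ s, f i = f j := by
  obtain ⟨i, j, hij, hf⟩ := Fintype.exists_ne_map_eq_of_card_lt f h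
  refine ⟨{i, j}, Finset.card_pair hij, ?_⟩
  simp only [Finset.mem_insert, Finset.mem_singleton]
  rintro a (rfl | rfl) b (rfl | rfl) <;> simp [hf]

namespace Gq

theorem injective_of_adj {q : ℕ} {u v : {u : Fin (q ^ 2) → Fin q // BalancedVec q u}}
    (h : (Gq q).Adj u v) : Function.Injective fun i => (u.val i, v.val i) :=
  ((Fintype.bijective_iff_surjective_and_card _).2 ⟨h.2, by simp [sq]⟩).1

theorem isIndepSet_setOf_forall_eq {q : ℕ} {ι : Type*} {e : ι → Fin (q ^ 2)}
    (he : Function.Injective e) {s : Finset ι} (hs : 1 < s.card) :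
    (Gq q).IsIndepSet {u | ∀ i ∈ s, ∀ j ∈ s, u.val (e i) = u.val (e j)} := by
  obtain ⟨i, hi, j, hj, hij⟩ := Finset.one_lt_card.1 hs
  intro u hu v hv _ huv
  exact hij (he (injective_of_adj huv (Prod.ext (hu i hi j hj) (hv i hi j hj))))

end Gq

/-- For every q ≥ 1, the chromatic number of G_q is at most (q+1 choose 2). -/
theorem stmt8 (q : ℕ) (hq : 1 ≤ q) :
    (Gq q).chromaticNumber ≤ ((q + 1).choose 2 : ℕ) := by
  classical
  obtain rfl | hq := hq.eq_or_lt
  · -- `q + 1` coordinates do not fit into `q² = 1`, but `G_1` has a single vertex.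
    exact (Gq 1).chromaticNumber_le_one_of_subsingleton
  have hle : q + 1 ≤ q ^ 2 := by nlinarith
  let e : Fin (q + 1) → Fin (q ^ 2) := Fin.castLE hle
  calc (Gq q).chromaticNumber
      ≤ Fintype.card {s : Finset (Fin (q + 1)) // s.card = 2} :=
        (Gq q).chromaticNumber_le_of_forall_mem_isIndepSet
          (fun s => {u | ∀ i ∈ s.1, ∀ j ∈ s.1, u.val (e i) = u.val (e j)})
          (fun s => Gq.isIndepSet_setOf_forall_eq (Fin.castLE_injective hle) (by rw [s.2]; norm_num))
          fun u => by
            obtain ⟨s, hs, hu⟩ := Fintype.exists_card_eq_two_forall_map_eq (u.val ∘ e) (by simp)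
            exact ⟨⟨s, hs⟩, hu⟩
    _ = ((q + 1).choose 2 : ℕ) := by simp [Fintype.card_finset_len]
end

section
/- Let F be a field with q' elements. Any linear erasure code for G_q over F assigns to each vertex a linear functional on F² such that functionals of adjacent vertices are linearly independent; since there are exactly q'+1 normalized nonzero vectors in F² (one-dimensional subspaces), this yields a proper coloring of G_q with q'+1 colors, hence χ(G_q) ≤ q_lin(G_q)+1. -/
open scoped LinearAlgebra.Projectivization

namespace SimpleGraph

variable {V K W : Type*} [Field K] [AddCommGroup W] [Module K W] (G : SimpleGraph V)

open Classical in
/-- A vertex with vector `0` has no neighbours, so its colour is arbitrary. -/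
noncomputable def lineColoring [Nontrivial W] (L : V → W)
    (hL : ∀ u v, G.Adj u v → LinearIndependent K ![L u, L v]) : G.Coloring (ℙ K W) :=
  Coloring.mk
    (fun v => if h : L v = 0 then Classical.arbitrary _ else .mk K (L v) h)
    (fun {u v} huv => by
      have hli := hL u v huv
      have hu : L u ≠ 0 := by simpa using hli.ne_zero 0
      have hv : L v ≠ 0 := by simpa using hli.ne_zero 1
      simpa only [dif_neg hu, dif_neg hv, ← Projectivization.independent_pair_iff_ne,
        Projectivization.independent_mk_iff_LinearIndependent] using hli)

theorem colorable_card_add_one_of_linearIndependent [Finite K] (hW : Module.finrank K W = 2)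
    (L : V → W) (hL : ∀ u v, G.Adj u v → LinearIndependent K ![L u, L v]) :
    G.Colorable (Nat.card K + 1) := by
  have : Nontrivial W := Module.nontrivial_of_finrank_pos (R := K) (by omega)
  have hcard := Projectivization.card_of_finrank_two K W hW
  have : Finite (ℙ K W) := Nat.finite_of_card_ne_zero (by omega)
  rw [← hcard]
  exact ⟨G.recolorOfEquiv (Finite.equivFin _) (G.lineColoring L hL)⟩

end SimpleGraph

/-- Let F be a field with q' elements.  If a linear erasure code for G_q over F
assigns to each vertex a linear functional on F² (represented by a vector of F²) such that the
functionals of adjacent vertices are linearly independent, then G_q admits a proper coloring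
with q'+1 colors (one per normalized vector of F²); hence χ(G_q) ≤ q'+1. -/
theorem stmt12 (q q' : ℕ) (F : Type) [Field F] [Fintype F] (hF : Fintype.card F = q')
    (L : {u : Fin (q ^ 2) → Fin q // BalancedVec q u} → Fin 2 → F)
    (hL : ∀ u v, (Gq q).Adj u v → LinearIndependent F ![L u, L v]) :
    (∃ g : {u : Fin (q ^ 2) → Fin q // BalancedVec q u} → Fin (q' + 1),
      ∀ u v, (Gq q).Adj u v → g u ≠ g v) ∧
    (Gq q).chromaticNumber ≤ (q' + 1 : ℕ) := by
  have hcol : (Gq q).Colorable (q' + 1) := by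
    simpa [hF] using
      (Gq q).colorable_card_add_one_of_linearIndependent (Module.finrank_fin_fun F) L hL
  exact ⟨⟨hcol.some, fun _ _ huv => hcol.some.valid huv⟩, hcol.chromaticNumber_le⟩
end

section
/- For every integer q ≥ 1, χ(H_q) ≤ q, where H_q is the subgraph of G_q induced on vectors that are concatenations of q permutations of [q]. Specifically, the q sets A_{1,q+i} = {u ∈ V(H_q) : u_1 = u_{q+i}} for i ∈ [q] are independent sets covering V(H_q). -/
/-- The index of position t of the i-th block of length q inside [q²]. -/
def blockIdx (q : ℕ) (i t : Fin q) : Fin (q ^ 2) :=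
  ⟨(i : ℕ) * q + (t : ℕ), by
    have h1 := i.isLt
    have h2 := t.isLt
    calc (i : ℕ) * q + (t : ℕ) < (i : ℕ) * q + q := by omega
      _ = ((i : ℕ) + 1) * q := by ring
      _ ≤ q * q := Nat.mul_le_mul_right q h1
      _ = q ^ 2 := (pow_two q).symm⟩

/-- u ∈ [q]^{q²} is a concatenation of q permutations of [q]: each block of length q is a
permutation of [q]. -/
def IsPermConcat (q : ℕ) (u : Fin (q ^ 2) → Fin q) : Prop :=
  ∀ i : Fin q, Function.Bijective fun t : Fin q => u (blockIdx q i t)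

/-- The graph H_q: the subgraph of G_q induced on the concatenations of q permutations;
u ~ v iff the pairs (u_i, v_i) over i ∈ [q²] exhaust all of [q]×[q]. -/
def Hq (q : ℕ) : SimpleGraph {u : Fin (q ^ 2) → Fin q // IsPermConcat q u} where
  Adj u v := u ≠ v ∧ Function.Surjective (fun i : Fin (q ^ 2) => (u.val i, v.val i))
  symm := by
    constructor
    rintro u v ⟨hne, hs⟩
    refine ⟨hne.symm, fun p => ?_⟩
    obtain ⟨i, hi⟩ := hs (p.2, p.1)
    rw [Prod.ext_iff] at hi
    exact ⟨i, by rw [Prod.ext_iff]; exact ⟨hi.2, hi.1⟩⟩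
  loopless := by constructor; rintro u ⟨hne, _⟩; exact hne rfl

lemma blockIdx_inj {q : ℕ} {i j t s : Fin q} :
    blockIdx q i t = blockIdx q j s ↔ i = j ∧ t = s := by
  refine ⟨fun h => ?_, fun ⟨hij, hts⟩ => hij ▸ hts ▸ rfl⟩
  have h' : t.val + q * i.val = s.val + q * j.val := by
    have := congrArg Fin.val h
    simp only [blockIdx] at this
    linarith
  have := (finProdFinEquiv (m := q) (n := q)).injective (a₁ := (i, t)) (a₂ := (j, s))
    (Fin.ext h')
  exact Prod.ext_iff.mp this

namespace Hq

lemma adj_injective {q : ℕ} {u v : {u : Fin (q ^ 2) → Fin q // IsPermConcat q u}}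
    (huv : (Hq q).Adj u v) : Function.Injective fun k => (u.val k, v.val k) :=
  ((Fintype.bijective_iff_surjective_and_card _).mpr ⟨huv.2, by simp [sq]⟩).injective

/-- The independent sets `{u | u j₀ = u (blockIdx q j t)}`, `t : Fin q`, cover the vertices:
an edge `u ~ v` inside one of them would send the distinct positions `j₀` and `blockIdx q j t`
to the same pair `(u j₀, v j₀)`. -/
lemma colorable_of_not_mem_block {q : ℕ} (j₀ : Fin (q ^ 2)) (j : Fin q)
    (hj₀ : ∀ t, blockIdx q j t ≠ j₀) : (Hq q).Colorable q := by
  let color (u : {u : Fin (q ^ 2) → Fin q // IsPermConcat q u}) : Fin q :=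
    (Equiv.ofBijective _ (u.2 j)).symm (u.val j₀)
  have color_spec (u : {u : Fin (q ^ 2) → Fin q // IsPermConcat q u}) :
      u.val (blockIdx q j (color u)) = u.val j₀ :=
    (Equiv.ofBijective _ (u.2 j)).apply_symm_apply _
  refine ⟨⟨color, fun {u v} huv hcol => hj₀ (color u) (adj_injective huv ?_)⟩⟩
  change color u = color v at hcol
  simp only [Prod.mk.injEq]
  exact ⟨color_spec u, hcol ▸ color_spec v⟩

end Hq

/-- For every q ≥ 1, χ(H_q) ≤ q. -/
theorem stmt15 (q : ℕ) (hq : 1 ≤ q) :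
    (Hq q).chromaticNumber ≤ (q : ℕ) := by
  obtain rfl | hq2 : q = 1 ∨ 2 ≤ q := by omega
  · exact SimpleGraph.chromaticNumber_le_one_of_subsingleton _
  · have h0 : 0 < q := by omega
    refine (Hq.colorable_of_not_mem_block (blockIdx q ⟨0, h0⟩ ⟨0, h0⟩) ⟨1, hq2⟩
      fun t h => ?_).chromaticNumber_le
    simp [blockIdx_inj] at h
end

section
/- Identify each vertex of H^{cyclic}_{q,ε} (concatenations of q cyclic permutations of Z_q) with a vector in (Z_q)^q recording the cyclic shifts. With ε = 1/q, two vertices u,v are adjacent in H^{cyclic}_{q,ε} if and only if the difference vector u−v ∈ (Z_q)^q takes at least q−1 distinct values. Consequently, the q² sets A_{i,j} = {u : u_1−u_2 = i, u_1−u_3 = j} (i,j ∈ Z_q) are independent and cover all vertices, so χ(H^{cyclic}_{q,ε}) ≤ q². -/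
/-- The concatenation of q cyclic permutations of Z_q with shift vector s: the entry of the
i-th block at position t is t + s_i. -/
def cyc (q : ℕ) (s : Fin q → ZMod q) (p : Fin q × Fin q) : ZMod q :=
  ((p.2 : ℕ) : ZMod q) + s p.1

/-- The graph H^{cyclic}_{q,ε} with ε = 1/q, on the concatenations of q cyclic permutations of
Z_q (identified with their shift vectors in (Z_q)^q): u ~ v iff the number of distinct pairs
(u_i, v_i) over the q² coordinates is at least (1-ε)q² = q² - q. -/
def HcycEps (q : ℕ) : SimpleGraph (Fin q → ZMod q) where
  Adj s t := s ≠ t ∧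
    q ^ 2 - q ≤ (Finset.univ.image fun p : Fin q × Fin q => (cyc q s p, cyc q t p)).card
  symm := by
    constructor
    rintro s t ⟨hne, hc⟩
    refine ⟨hne.symm, ?_⟩
    have h : (Finset.univ.image fun p : Fin q × Fin q => (cyc q t p, cyc q s p)) =
        (Finset.univ.image fun p : Fin q × Fin q => (cyc q s p, cyc q t p)).image
          Prod.swap := by
      rw [Finset.image_image]; rfl
    rw [h, Finset.card_image_of_injective _ Prod.swap_injective]
    exact hc
  loopless := by constructor; rintro s ⟨hne, _⟩; exact hne rfl

/-!
In block `i` the pairs `(t + u i, t + v i)` are exactly the pairs `(x, y)` with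
`x - y = u i - v i`, so the pairs over all `q²` coordinates are the `(x, y)` whose difference is
a value of `u - v`; there are `q` such pairs per value. Hence `u ~ v` iff `u - v` takes at least
`q - 1` values. The colour `(u 0 - u 1, u 0 - u 2)` is then proper: two vertices with the same
colour have `u - v` constant on the coordinates `0, 1, 2`, so it takes at most `q - 2` values.
-/

open Finset

section Cyclic

variable {q : ℕ} [NeZero q]

lemma mem_image_cyc_pairs_iff (u v : Fin q → ZMod q) (x : ZMod q × ZMod q) :
    x ∈ univ.image (fun p : Fin q × Fin q => (cyc q u p, cyc q v p)) ↔
      x.1 - x.2 ∈ univ.image fun i => u i - v i := by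
  simp only [mem_image, mem_univ, true_and, Prod.exists, cyc]
  constructor
  · rintro ⟨i, t, rfl⟩
    exact ⟨i, by ring⟩
  · rintro ⟨i, hi⟩
    refine ⟨i, ⟨(x.1 - u i).val, ZMod.val_lt _⟩, Prod.ext ?_ ?_⟩
    · simp only [ZMod.natCast_zmod_val]; ring
    · simp only [ZMod.natCast_zmod_val]; linear_combination -hi

lemma card_image_cyc_pairs (u v : Fin q → ZMod q) :
    (univ.image fun p : Fin q × Fin q => (cyc q u p, cyc q v p)).card =
      q * (univ.image fun i => u i - v i).card := by
  calc _ = (univ ×ˢ univ.image fun i => u i - v i).card := by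
        refine card_nbij' (fun x => (x.1, x.1 - x.2)) (fun x => (x.1, x.1 - x.2))
          (fun x hx => ?_) (fun x hx => ?_) (fun x _ => by simp) (fun x _ => by simp)
        · rw [mem_coe, mem_image_cyc_pairs_iff] at hx
          exact mem_product.2 ⟨mem_univ _, hx⟩
        · rw [mem_coe, mem_image_cyc_pairs_iff, sub_sub_cancel]
          exact (mem_product.1 hx).2
    _ = _ := by rw [card_product, card_univ, ZMod.card]

lemma hcycEps_adj_iff (u v : Fin q → ZMod q) :
    (HcycEps q).Adj u v ↔ u ≠ v ∧ q - 1 ≤ (univ.image fun i => u i - v i).card := by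
  have hq : q ^ 2 - q = q * (q - 1) := by rw [Nat.mul_sub_one, sq]
  simp only [HcycEps, card_image_cyc_pairs, hq,
    Nat.mul_le_mul_left_iff (Nat.pos_of_neZero q)]

end Cyclic

lemma Finset.card_image_univ_le_sub_two {ι α : Type*} [Fintype ι] [DecidableEq ι]
    [DecidableEq α] {f : ι → α} {i j k : ι} (hij : i ≠ j) (hik : i ≠ k) (hjk : j ≠ k)
    (hj : f j = f i) (hk : f k = f i) :
    (univ.image f).card ≤ Fintype.card ι - 2 := by
  have hsub : univ.image f ⊆ ({j, k}ᶜ : Finset ι).image f := by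
    intro _ h
    obtain ⟨l, -, rfl⟩ := mem_image.1 h
    by_cases hl : l = j ∨ l = k
    · rcases hl with rfl | rfl
      · exact mem_image.2 ⟨i, by simp [hij, hik], hj.symm⟩
      · exact mem_image.2 ⟨i, by simp [hij, hik], hk.symm⟩
    · exact mem_image_of_mem f (by simpa using hl)
  calc (univ.image f).card ≤ ({j, k}ᶜ : Finset ι).card :=
        (card_le_card hsub).trans card_image_le
    _ = Fintype.card ι - 2 := by rw [card_compl, card_pair hjk]

lemma hcycEps_colorable_sq {q : ℕ} (hq : 3 ≤ q) : (HcycEps q).Colorable (q ^ 2) := by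
  have : NeZero q := ⟨by omega⟩
  let i₀ : Fin q := ⟨0, by omega⟩
  let i₁ : Fin q := ⟨1, by omega⟩
  let i₂ : Fin q := ⟨2, by omega⟩
  let C : (HcycEps q).Coloring (ZMod q × ZMod q) :=
    SimpleGraph.Coloring.mk (fun u => (u i₀ - u i₁, u i₀ - u i₂)) fun {u v} huv hc => by
      obtain ⟨-, hcard⟩ := (hcycEps_adj_iff u v).1 huv
      simp only [Prod.mk.injEq] at hc
      have hle := Finset.card_image_univ_le_sub_two (f := fun i => u i - v i)
        (i := i₀) (j := i₁) (k := i₂) (by simp [i₀, i₁, Fin.ext_iff])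
        (by simp [i₀, i₂, Fin.ext_iff]) (by simp [i₁, i₂, Fin.ext_iff])
        (by linear_combination -hc.1) (by linear_combination -hc.2)
      rw [Fintype.card_fin] at hle
      omega
  simpa [ZMod.card, sq] using C.colorable

/-- With ε = 1/q, two shift vectors u,v are adjacent in H^{cyclic}_{q,ε} iff
(they are distinct and) the difference vector u - v takes at least q-1 distinct values;
consequently χ(H^{cyclic}_{q,ε}) ≤ q². -/
theorem stmt16 (q : ℕ) (hq : 1 ≤ q) :
    (∀ s t : Fin q → ZMod q,
      (HcycEps q).Adj s t ↔
        s ≠ t ∧ q - 1 ≤ (Finset.univ.image fun i : Fin q => s i - t i).card) ∧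
    (HcycEps q).chromaticNumber ≤ (q ^ 2 : ℕ) := by
  have : NeZero q := ⟨by omega⟩
  refine ⟨hcycEps_adj_iff, ?_⟩
  rcases le_or_gt 3 q with h3 | h3
  · exact (hcycEps_colorable_sq h3).chromaticNumber_le
  · -- For `q ≤ 2` there are only `q ^ q ≤ q ^ 2` vertices.
    refine SimpleGraph.chromaticNumber_le_card.trans ?_
    simp only [Fintype.card_pi, ZMod.card, prod_const, card_univ, Fintype.card_fin]
    exact_mod_cast Nat.pow_le_pow_right hq (by omega)
end

section
/- Let p be a prime power and n any integer. Then q_{ε̃}(κ_{n,2}) ≤ p for ε̃ = 1/(p+1): there exists an encoding C:F²→F^n over a field F of size p and decoding D such that the probability over a uniformly random message m ∈ F² and uniformly random edge e of the complete graph K_n that D(C_e(m)) = m is at least 1 − 1/(p+1). -/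
/-!
Over a field `F` with `p` elements, the `p + 1` maps `m ↦ m 0 + a * m 1` (`a : F`) and
`m ↦ m 1` are the coordinates of a `[p + 1, 2]` MDS code: any two of them determine `m`.
Split the `n` positions into `p + 1` groups by residue mod `p + 1` and give every position of a
group the same coordinate. A pair of positions from different groups then determines the
message, and since the groups have at most `⌈n / (p + 1)⌉` elements, at least a `p / (p + 1)`
fraction of the ordered pairs of distinct positions are of this kind.
-/

open Finset

section Decoding

variable {M ι A : Type*}

/-- The restriction `C_e(m)` of a codeword `w = C(m)` to the edge `e = {i, j}`. -/
def restrictPair [DecidableEq ι] (w : ι → A) (i j : ι) : ι → Option A :=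
  fun k => if k = i ∨ k = j then some (w k) else none

/-- Some message whose codeword agrees with `w` wherever `w` is not erased (an arbitrary
message if there is none). -/
noncomputable def consistentDecoder [Nonempty M] (C : M → ι → A) (w : ι → Option A) : M :=
  Classical.epsilon fun m => ∀ k a, w k = some a → C m k = a

theorem consistentDecoder_restrictPair [Nonempty M] [DecidableEq ι] (C : M → ι → A) {i j : ι}
    (hij : ∀ ⦃m m'⦄, C m i = C m' i → C m j = C m' j → m = m') (m : M) :
    consistentDecoder C (restrictPair (C m) i j) = m := by
  have hspec := Classical.epsilon_spec (p := fun m' => ∀ k a,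
    restrictPair (C m) i j k = some a → C m' k = a) ⟨m, fun k a hk => by
      unfold restrictPair at hk; split_ifs at hk; exact Option.some_injective _ hk⟩
  exact hij (hspec i _ (by simp [restrictPair])) (hspec j _ (by simp [restrictPair]))

def PairwiseSeparating {κ : Type*} (c : κ → M → A) : Prop :=
  ∀ ⦃g h⦄, g ≠ h → ∀ ⦃m m'⦄, c g m = c g m' → c h m = c h m' → m = m'

end Decoding

section MDS

variable {F : Type*} [Field F]

/-- The coordinates of the doubly extended Reed–Solomon code of dimension 2, indexed by the
projective line `Option F` (`none` is the point at infinity). -/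
def projCoord : Option F → (Fin 2 → F) → F
  | none, m => m 1
  | some a, m => m 0 + a * m 1

theorem pairwiseSeparating_projCoord : PairwiseSeparating (projCoord (F := F)) := by
  have hext : ∀ {m m' : Fin 2 → F}, m 0 = m' 0 → m 1 = m' 1 → m = m' := fun h0 h1 =>
    funext fun t => by fin_cases t <;> assumption
  rintro (_ | a) (_ | b) hab m m' hg hh <;> simp only [projCoord] at hg hh
  · exact absurd rfl hab
  · exact hext (by rw [hg] at hh; exact add_right_cancel hh) hg
  · exact hext (by rw [hh] at hg; exact add_right_cancel hg) hh
  · have hne : a - b ≠ 0 := sub_ne_zero.mpr fun h => hab (congrArg some h)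
    have h1 : m 1 = m' 1 := mul_left_cancel₀ hne (by linear_combination hg - hh)
    exact hext (by rw [h1] at hg; exact add_right_cancel hg) h1

end MDS

theorem exists_pairwiseSeparating_of_isPrimePow {p : ℕ} (hp : IsPrimePow p) :
    ∃ c : Fin (p + 1) → (Fin 2 → Fin p) → Fin p, PairwiseSeparating c := by
  obtain ⟨q, s, hq, hs, rfl⟩ := hp
  have : Fact q.Prime := ⟨hq.nat_prime⟩
  have : Fintype (GaloisField q s) := Fintype.ofFinite _
  have hcard : Fintype.card (GaloisField q s) = q ^ s := by
    rw [← Nat.card_eq_fintype_card, GaloisField.card q s hs.ne']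
  let e := Fintype.equivFinOfCardEq hcard
  let σ := (Fintype.equivFinOfCardEq (α := Option (GaloisField q s))
    (by rw [Fintype.card_option, hcard])).symm
  refine ⟨fun g m => e (projCoord (σ g) (e.symm ∘ m)), fun g h hgh m m' hg hh => ?_⟩
  exact e.symm.injective.comp_left <| pairwiseSeparating_projCoord (σ.injective.ne hgh)
    (e.injective hg) (e.injective hh)

theorem card_sameResidue_le (p n : ℕ) :
    (p + 1) * #{x : Fin n × Fin n | x.1 % (p + 1) = x.2 % (p + 1)} ≤ n * (n + p) := by
  set s := ({x : Fin n × Fin n | x.1 % (p + 1) = x.2 % (p + 1)} : Finset _)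
  -- within a residue class, a position is determined by its quotient by `p + 1`
  have hmaps : Set.MapsTo (fun x : Fin n × Fin n => (x.1, (x.2 : ℕ) / (p + 1))) s
      (univ ×ˢ range ((n + p) / (p + 1)) : Finset (Fin n × ℕ)) := by
    intro x _
    simp only [coe_product, coe_univ, coe_range, Set.mem_prod, Set.mem_univ, Set.mem_Iio,
      true_and]
    calc (x.2 : ℕ) / (p + 1) < (x.2 : ℕ) / (p + 1) + 1 := lt_add_one _
      _ = (x.2 + (p + 1)) / (p + 1) := (Nat.add_div_right _ p.succ_pos).symm
      _ ≤ (n + p) / (p + 1) := Nat.div_le_div_right (by omega)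
  have hinj : Set.InjOn (fun x : Fin n × Fin n => (x.1, (x.2 : ℕ) / (p + 1))) s := by
    rintro ⟨i, j⟩ hij ⟨i', j'⟩ hij' h
    simp only [s, coe_filter, mem_univ, true_and, Set.mem_ofPred_eq, Prod.mk.injEq] at hij hij' h
    obtain ⟨rfl, hdiv⟩ := h
    refine Prod.ext rfl (Fin.ext ?_)
    rw [← Nat.div_add_mod j (p + 1), ← Nat.div_add_mod j' (p + 1), hdiv, ← hij, hij']
  have hcard := card_le_card_of_injOn _ hmaps hinj
  rw [card_product, card_univ, Fintype.card_fin, card_range] at hcard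
  calc (p + 1) * #s ≤ (p + 1) * (n * ((n + p) / (p + 1))) := by gcongr
    _ = n * ((n + p) / (p + 1) * (p + 1)) := by ring
    _ ≤ n * (n + p) := by gcongr; exact Nat.div_mul_le_self _ _

theorem card_distinctResidue_ge (p n : ℕ) :
    p * (n * (n - 1)) ≤ (p + 1) * #{x : Fin n × Fin n | x.1 % (p + 1) ≠ x.2 % (p + 1)} := by
  have hsplit := card_filter_add_card_filter_not (s := univ)
    (fun x : Fin n × Fin n => x.1 % (p + 1) = x.2 % (p + 1))
  rw [card_univ, Fintype.card_prod, Fintype.card_fin] at hsplit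
  have hsame := card_sameResidue_le p n
  rcases n with _ | n
  · simp
  · rw [Nat.add_sub_cancel]
    nlinarith

/-- For a prime power p and any n, q_ε̃(κ_{n,2}) ≤ p for ε̃ = 1/(p+1): there
exist an encoding C : F² → F^n over an alphabet F of size p and a decoding D such that, over a
uniformly random message m ∈ F² and a uniformly random (ordered) edge of the complete graph
K_n, decoding succeeds with probability at least 1 - 1/(p+1) = p/(p+1).  The probability
bound is stated by counting: (p+1)·#{successes} ≥ p·(p²·n(n-1)). -/
theorem stmt18 (p n : ℕ) (hp : IsPrimePow p) :
    ∃ (C : (Fin 2 → Fin p) → Fin n → Fin p)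
      (D : (Fin n → Option (Fin p)) → Fin 2 → Fin p),
      p * (p ^ 2 * (n * (n - 1))) ≤
        (p + 1) * Nat.card {x : (Fin 2 → Fin p) × Fin n × Fin n //
          x.2.1 ≠ x.2.2 ∧
          D (fun i => if i = x.2.1 ∨ i = x.2.2 then some (C x.1 i) else none) = x.1} := by
  obtain ⟨c, hc⟩ := exists_pairwiseSeparating_of_isPrimePow hp
  have : Nonempty (Fin 2 → Fin p) := ⟨fun _ => ⟨0, hp.pos⟩⟩
  let C : (Fin 2 → Fin p) → Fin n → Fin p := fun m k => c (Fin.ofNat (p + 1) k) m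
  refine ⟨C, consistentDecoder C, ?_⟩
  set T := ({x : Fin n × Fin n | x.1 % (p + 1) ≠ x.2 % (p + 1)} : Finset _)
  have hsucc : univ ×ˢ T ⊆ ({x : (Fin 2 → Fin p) × Fin n × Fin n | x.2.1 ≠ x.2.2 ∧
      consistentDecoder C (restrictPair (C x.1) x.2.1 x.2.2) = x.1} : Finset _) := by
    rintro ⟨m, i, j⟩ hx
    simp only [T, mem_product, mem_univ, mem_filter, true_and] at hx ⊢
    have hgroups : Fin.ofNat (p + 1) i ≠ Fin.ofNat (p + 1) j := by simpa [Fin.ext_iff] using hx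
    exact ⟨fun h => hx (by rw [h]), consistentDecoder_restrictPair C (hc hgroups) m⟩
  calc p * (p ^ 2 * (n * (n - 1))) = p ^ 2 * (p * (n * (n - 1))) := by ring
    _ ≤ p ^ 2 * ((p + 1) * #T) := Nat.mul_le_mul_left _ (card_distinctResidue_ge p n)
    _ = (p + 1) * #((univ : Finset (Fin 2 → Fin p)) ×ˢ T) := by
      simp only [card_product, card_univ, Fintype.card_fun, Fintype.card_fin]
      ring
    _ ≤ _ := by
      rw [Nat.card_eq_fintype_card, Fintype.card_subtype]
      exact Nat.mul_le_mul_left _ (card_le_card hsucc)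
end
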